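/- arXiv:2005.02128 — 3 statements merged into one kernel-verified Lean document; each statement's English description precedes it below -/
import Mathlib

section
/- Let μ be a (C,α)-Ahlfors regular measure on ℝ (with the Ahlfors regularity inequalities holding for all radii ρ > 0). Then μ is absolutely (2^α C², α)-decaying on ℝ: for any open ball B ⊂ ℝ of radius r centred in supp μ, any point y ∈ ℝ, and any ε > 0, one has μ(B ∩ B(y,ε)) ≤ 2^α C² (ε/r)^α μ(B). -/
open MeasureTheory Metric

/-- The (topological) support of a measure. -/
def msupp {X : Type*} [MetricSpace X] [MeasurableSpace X] (μ : Measure X) : Set X :=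
  {x | ∀ r : ℝ, 0 < r → 0 < μ (ball x r)}

/-!
If `B(x, r) ∩ B(y, ε)` is not `μ`-null, it meets the support in a point `w`, and then it lies in
`B̄(w, 2ε)`. The upper regularity bound at `w` and the lower one at `x` give
`μ(B ∩ B(y, ε)) ≤ C (2ε)^α = 2^α C² (ε/r)^α · C⁻¹ r^α ≤ 2^α C² (ε/r)^α μ(B)`.
-/

theorem ball_subset_closedBall_of_mem_ball {X : Type*} [PseudoMetricSpace X] {w y : X} {ε : ℝ}
    (hw : w ∈ ball y ε) : ball y ε ⊆ closedBall w (2 * ε) :=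
  (ball_subset_ball' (by linarith [mem_ball'.1 hw])).trans ball_subset_closedBall

section

variable {X : Type*} [MetricSpace X] [MeasurableSpace X]

theorem msupp_eq_support (μ : Measure X) : msupp μ = μ.support := by
  ext x
  exact nhds_basis_ball.mem_measureSupport.symm

theorem ofReal_mul_rpow_le_measure_ball (μ : Measure X) {x : X} {c α r : ℝ} (hr : 0 < r)
    (hlower : ∀ ρ, 0 < ρ → ρ < r → ENNReal.ofReal (c * ρ ^ α) ≤ μ (closedBall x ρ)) :
    ENNReal.ofReal (c * r ^ α) ≤ μ (ball x r) := by
  have hcont : ContinuousAt (fun ρ : ℝ => ENNReal.ofReal (c * ρ ^ α)) r :=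
    ENNReal.continuous_ofReal.continuousAt.comp
      (continuousAt_const.mul (Real.continuousAt_rpow_const r α (Or.inl hr.ne')))
  refine le_of_tendsto (hcont.tendsto.mono_left (nhdsWithin_le_nhds (s := Set.Iio r))) ?_
  filter_upwards [Ioo_mem_nhdsLT_of_mem (Set.mem_Ioc.2 ⟨half_lt_self hr, le_rfl⟩)] with ρ hρ
  exact (hlower ρ ((half_pos hr).trans hρ.1) hρ.2).trans (measure_mono (closedBall_subset_ball hρ.2))

theorem measure_ball_inter_ball_le [HereditarilyLindelofSpace X] (μ : Measure X) {C α : ℝ}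
    (hupper : ∀ w ∈ msupp μ, ∀ ρ : ℝ, 0 < ρ → μ (closedBall w ρ) ≤ ENNReal.ofReal (C * ρ ^ α))
    {x : X} (hx : x ∈ msupp μ)
    (hlower : ∀ ρ : ℝ, 0 < ρ → ENNReal.ofReal (C⁻¹ * ρ ^ α) ≤ μ (closedBall x ρ))
    {r : ℝ} (hr : 0 < r) (y : X) {ε : ℝ} (hε : 0 < ε) :
    μ (ball x r ∩ ball y ε) ≤ ENNReal.ofReal (2 ^ α * C ^ 2 * (ε / r) ^ α) * μ (ball x r) := by
  have hC : 0 < C := by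
    have h := (hx r hr).trans_le ((measure_mono ball_subset_closedBall).trans (hupper x hx r hr))
    exact (mul_pos_iff_of_pos_right (Real.rpow_pos_of_pos hr α)).1 (ENNReal.ofReal_pos.1 h)
  rcases eq_zero_or_pos (μ (ball x r ∩ ball y ε)) with hnull | hpos
  · rw [hnull]
    exact zero_le
  obtain ⟨w, ⟨-, hwy⟩, hw⟩ := Measure.nonempty_inter_support_of_pos hpos
  rw [← msupp_eq_support] at hw
  calc μ (ball x r ∩ ball y ε) ≤ μ (closedBall w (2 * ε)) :=
        measure_mono (Set.inter_subset_right.trans (ball_subset_closedBall_of_mem_ball hwy))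
    _ ≤ ENNReal.ofReal (C * (2 * ε) ^ α) := hupper w hw _ (by positivity)
    _ = ENNReal.ofReal (2 ^ α * C ^ 2 * (ε / r) ^ α) * ENNReal.ofReal (C⁻¹ * r ^ α) := by
        rw [← ENNReal.ofReal_mul (by positivity), Real.mul_rpow zero_le_two hε.le,
          Real.div_rpow hε.le hr.le]
        have := (Real.rpow_pos_of_pos hr α).ne'
        field_simp
    _ ≤ ENNReal.ofReal (2 ^ α * C ^ 2 * (ε / r) ^ α) * μ (ball x r) := by
        gcongr
        exact ofReal_mul_rpow_le_measure_ball μ hr fun ρ hρ _ => hlower ρ hρ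

end

theorem stmt1_general (μ : Measure ℝ) (C α : ℝ)
    (hAhlfors : ∀ x ∈ msupp μ, ∀ ρ : ℝ, 0 < ρ →
      ENNReal.ofReal (C⁻¹ * ρ ^ α) ≤ μ (closedBall x ρ) ∧
      μ (closedBall x ρ) ≤ ENNReal.ofReal (C * ρ ^ α)) :
    ∀ x ∈ msupp μ, ∀ r : ℝ, 0 < r → ∀ y ε : ℝ, 0 < ε →
      μ (ball x r ∩ ball y ε) ≤
        ENNReal.ofReal (2 ^ α * C ^ 2 * (ε / r) ^ α) * μ (ball x r) :=
  fun x hx _ hr y _ hε =>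
    measure_ball_inter_ball_le μ (fun w hw ρ hρ => (hAhlfors w hw ρ hρ).2) hx
      (fun ρ hρ => (hAhlfors x hx ρ hρ).1) hr y hε

/-- A (C,α)-Ahlfors regular measure on ℝ (regularity holding for all radii) is
absolutely (2^α C², α)-decaying on ℝ: for any ball B of radius r centred in supp μ,
any y ∈ ℝ and any ε > 0, μ(B ∩ B(y,ε)) ≤ 2^α C² (ε/r)^α μ(B). -/
theorem stmt1 (μ : Measure ℝ) (C α : ℝ) (hC : 1 < C) (hα : 0 < α)
    (hAhlfors : ∀ x ∈ msupp μ, ∀ ρ : ℝ, 0 < ρ →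
      ENNReal.ofReal (C⁻¹ * ρ ^ α) ≤ μ (closedBall x ρ) ∧
      μ (closedBall x ρ) ≤ ENNReal.ofReal (C * ρ ^ α)) :
    ∀ x ∈ msupp μ, ∀ r : ℝ, 0 < r → ∀ y ε : ℝ, 0 < ε →
      μ (ball x r ∩ ball y ε) ≤
        ENNReal.ofReal (2 ^ α * C ^ 2 * (ε / r) ^ α) * μ (ball x r) :=
  stmt1_general μ C α hAhlfors
end

section
/- Let 1 ≤ r ≤ n and v₁,…,v_r ∈ ℤ^{n+1} be a primitive collection. Then there exists a primitive collection u₁,…,u_{n+1-r} ∈ ℤ^{n+1} such that v_i · u_j = 0 for all i, j, and ‖v₁∧⋯∧v_r‖ = ‖u₁∧⋯∧u_{n+1-r}‖. -/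
/-!
A primitive family `v` extends to a `ℤ`-basis `b` of `ℤ^{n+1}`: the quotient of `ℤ^{n+1}` by the
span of `v` is torsion-free, hence free. Let `u` be the vectors of the dot-product dual basis of `b`
that are dual to the added vectors. Subfamilies of `ℤ`-bases are primitive, and `u ⟂ v` by duality.
The matrices `A`, `C` whose rows are `b` and its dual satisfy `A Cᵀ = 1`, so Jacobi's identity for
complementary minors makes each Plücker coordinate of `u` at an index set `t` equal to
`± det A = ±1` times the coordinate of `v` at the complement of `t`.
-/

open Finset

/-- The coordinates of the wedge product v₁ ∧ ⋯ ∧ v_k of vectors in ℝⁿ, in the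
standard orthonormal basis of ⋀^k(ℝⁿ): the coordinate at an index set s of
cardinality k is det (v_j (s_i))_{i,j}; all other coordinates vanish. -/
noncomputable def wedge {n k : ℕ} (v : Fin k → Fin n → ℝ) : Finset (Fin n) → ℝ :=
  fun s =>
    if h : s.card = k then
      Matrix.det (Matrix.of fun p q : Fin k => v q ((s.orderIsoOfFin h p) : Fin n))
    else 0

/-- The inner product on multivectors induced by the Euclidean inner product,
making the standard wedge basis orthonormal. -/
noncomputable def mvInner {n : ℕ} (x y : Finset (Fin n) → ℝ) : ℝ :=
  ∑ s : Finset (Fin n), x s * y s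

/-- The Euclidean norm of a multivector. -/
noncomputable def mvNorm {n : ℕ} (x : Finset (Fin n) → ℝ) : ℝ :=
  Real.sqrt (mvInner x x)

/-- The Euclidean norm on ℝⁿ. -/
noncomputable def eNorm {n : ℕ} (a : Fin n → ℝ) : ℝ :=
  Real.sqrt (∑ k, a k ^ 2)

/-- Left wedge of a vector with a multivector, in coordinates. -/
noncomputable def vwedge {n : ℕ} (a : Fin n → ℝ) (w : Finset (Fin n) → ℝ) :
    Finset (Fin n) → ℝ :=
  fun s => ∑ x ∈ s, (-1 : ℝ) ^ (s.filter (fun y => y < x)).card * a x * w (s.erase x)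

/-- A collection of integer vectors is primitive if it is linearly independent over ℝ
and its ℤ-span equals the intersection of ℤⁿ with its ℝ-span. -/
def IsPrimitive {n r : ℕ} (v : Fin r → Fin n → ℤ) : Prop :=
  LinearIndependent ℝ (fun j => fun k => (v j k : ℝ)) ∧
  ∀ x : Fin n → ℤ,
    ((fun k => (x k : ℝ)) ∈
      Submodule.span ℝ (Set.range fun j => fun k => (v j k : ℝ))) →
    x ∈ Submodule.span ℤ (Set.range v)

open Matrix Module

namespace Matrix

variable {R K L : Type*} [CommRing R] [Fintype K] [Fintype L] [DecidableEq K] [DecidableEq L]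

theorem det_mul_det_toBlocks₂₂_of_mul_eq_one {M N : Matrix (K ⊕ L) (K ⊕ L) R} (h : M * N = 1) :
    M.det * N.toBlocks₂₂.det = M.toBlocks₁₁.det := by
  rw [← fromBlocks_toBlocks M, ← fromBlocks_toBlocks N, fromBlocks_multiply,
    ← fromBlocks_one, fromBlocks_inj] at h
  obtain ⟨-, h₁₂, -, h₂₂⟩ := h
  have key : M * fromBlocks 1 N.toBlocks₁₂ 0 N.toBlocks₂₂ =
      fromBlocks M.toBlocks₁₁ 0 M.toBlocks₂₁ 1 := by
    conv_lhs => rw [← fromBlocks_toBlocks M]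
    simp [fromBlocks_multiply, h₁₂, h₂₂]
  simpa [det_fromBlocks_zero₂₁, det_fromBlocks_zero₁₂] using congrArg det key

theorem det_submatrix_sq_eq_one_of_mul_transpose_eq_one {ι κ : Type*} [Fintype ι]
    [DecidableEq ι] [Fintype κ] [DecidableEq κ] {A C : Matrix ι κ ℤ} (hAC : A * Cᵀ = 1)
    (e : ι ≃ κ) : (A.submatrix id e).det ^ 2 = 1 := by
  refine Int.isUnit_sq (IsUnit.of_mul_eq_one (C.submatrix id e)ᵀ.det ?_)
  rw [← det_mul, transpose_submatrix, submatrix_mul_equiv, hAC, submatrix_id_id, det_one]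

end Matrix

noncomputable def castVec (ι : Type*) : (ι → ℤ) →ₗ[ℤ] ι → ℝ :=
  LinearMap.compLeft (Int.castAddHom ℝ).toIntLinearMap ι

@[simp]
theorem castVec_apply {ι : Type*} (x : ι → ℤ) (k : ι) : castVec ι x k = x k := rfl

section

variable {N : ℕ} {ι : Type*} (b : Basis ι ℤ (Fin N → ℤ))

theorem Module.Basis.top_le_span_castVec :
    ⊤ ≤ Submodule.span ℝ (Set.range (castVec (Fin N) ∘ b)) := by
  rw [← (Pi.basisFun ℝ (Fin N)).span_eq, Submodule.span_le]
  rintro _ ⟨k, rfl⟩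
  have hk : Pi.basisFun ℤ (Fin N) k ∈ Submodule.span ℤ (Set.range b) := b.span_eq ▸ trivial
  have hmap := Submodule.mem_map_of_mem (f := castVec (Fin N)) hk
  rw [Submodule.map_span, ← Set.range_comp] at hmap
  have hcast : castVec (Fin N) (Pi.basisFun ℤ (Fin N) k) = Pi.basisFun ℝ (Fin N) k := by
    ext j
    simp [Pi.single_apply]
  exact hcast ▸ Submodule.span_le_restrictScalars ℤ ℝ _ hmap

noncomputable def Module.Basis.castReal [Fintype ι] : Basis ι ℝ (Fin N → ℝ) :=
  basisOfTopLeSpanOfCardEqFinrank _ (Module.Basis.top_le_span_castVec b)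
    (by simp [← finrank_eq_card_basis b])

@[simp]
theorem Module.Basis.coe_castReal [Fintype ι] : ⇑b.castReal = castVec (Fin N) ∘ b :=
  coe_basisOfTopLeSpanOfCardEqFinrank _ _ _

theorem Module.Basis.castReal_repr_castVec [Fintype ι] (x : Fin N → ℤ) (i : ι) :
    b.castReal.repr (castVec (Fin N) x) i = b.repr x i := by
  have hx : castVec (Fin N) x = ∑ j, (b.repr x j : ℝ) • b.castReal j := by
    ext k
    conv_lhs => rw [← b.sum_repr x]
    simp [Finset.sum_apply]
  rw [hx, b.castReal.repr_sum_self]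

end

theorem Module.Basis.isPrimitive_comp {N m : ℕ} {ι : Type*} [Fintype ι] (b : Basis ι ℤ (Fin N → ℤ))
    {φ : Fin m → ι} (hφ : Function.Injective φ) : IsPrimitive (b ∘ φ) := by
  refine ⟨?_, fun x hx => ?_⟩
  · have h := b.castReal.linearIndependent.comp φ hφ
    rwa [b.coe_castReal] at h
  · have hx' : castVec (Fin N) x ∈ Submodule.span ℝ (b.castReal '' Set.range φ) := by
      rw [← Set.range_comp, b.coe_castReal]
      exact hx
    rw [b.castReal.mem_span_image] at hx'
    rw [Set.range_comp, b.mem_span_image]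
    intro i hi
    exact hx' (by simpa [b.castReal_repr_castVec] using hi)

namespace IsPrimitive

variable {N r : ℕ} {v : Fin r → Fin N → ℤ}

theorem linearIndependent_int (hv : IsPrimitive v) : LinearIndependent ℤ v :=
  LinearIndependent.of_comp (castVec (Fin N)) (hv.1.restrict_scalars' ℤ)

theorem isTorsionFree_quotient (hv : IsPrimitive v) :
    IsTorsionFree ℤ ((Fin N → ℤ) ⧸ Submodule.span ℤ (Set.range v)) := by
  refine .of_smul_eq_zero fun c y hcy => or_iff_not_imp_left.mpr fun hc => ?_
  induction y using Submodule.Quotient.induction_on with | _ y => ?_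
  rw [← Submodule.Quotient.mk_smul, Submodule.Quotient.mk_eq_zero,
    Submodule.mem_span_range_iff_exists_fun] at hcy
  obtain ⟨a, ha⟩ := hcy
  rw [Submodule.Quotient.mk_eq_zero]
  refine hv.2 y ((Submodule.mem_span_range_iff_exists_fun ℝ).mpr ⟨fun j => (a j : ℝ) / c, ?_⟩)
  ext k
  have hk := congrFun ha k
  simp only [Finset.sum_apply, Pi.smul_apply, smul_eq_mul] at hk ⊢
  have hc' : (c : ℝ) ≠ 0 := by exact_mod_cast hc
  simp_rw [div_mul_eq_mul_div, ← Finset.sum_div]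
  rw [div_eq_iff hc']
  exact_mod_cast hk.trans (mul_comm _ _)

theorem exists_basis_extension (hv : IsPrimitive v) :
    ∃ b : Basis (Fin r ⊕ Fin (N - r)) ℤ (Fin N → ℤ), ∀ i, b (Sum.inl i) = v i := by
  have := hv.isTorsionFree_quotient
  let Q := (Fin N → ℤ) ⧸ Submodule.span ℤ (Set.range v)
  let bQ := Module.Free.chooseBasis ℤ Q
  let b := (Basis.span hv.linearIndependent_int).sumQuot bQ
  have hcard : r + Fintype.card (Module.Free.ChooseBasisIndex ℤ Q) = N := by
    simpa using (finrank_eq_card_basis b).symm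
  refine ⟨b.reindex (Equiv.sumCongr (Equiv.refl _) (Fintype.equivFinOfCardEq (by omega))),
    fun i => ?_⟩
  simp [b, Basis.span_apply]

end IsPrimitive

section

variable {R n ι : Type*} [CommRing R] [Fintype n] [DecidableEq n] [Finite ι] [DecidableEq ι]

noncomputable def Module.Basis.dotDual (b : Basis ι R (n → R)) : Basis ι R (n → R) :=
  b.dualBasis.map (dotProductEquiv R n).symm

theorem Module.Basis.dotProduct_dotDual (b : Basis ι R (n → R)) (i j : ι) :
    b i ⬝ᵥ b.dotDual j = if i = j then 1 else 0 := by
  rw [dotProduct_comm, ← dotProductEquiv_apply_apply, dotDual, Basis.map_apply,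
    LinearEquiv.apply_symm_apply, b.dualBasis_apply_self]

theorem Module.Basis.of_mul_transpose_of_dotDual [Fintype ι] (b : Basis ι R (n → R)) :
    of ⇑b * (of ⇑b.dotDual)ᵀ = 1 := by
  ext i j
  rw [one_apply, ← b.dotProduct_dotDual]
  rfl

end

noncomputable def Finset.sumEquivOfCompl {α : Type*} [Fintype α] [LinearOrder α] (t : Finset α)
    {r m : ℕ} (hc : tᶜ.card = r) (ht : t.card = m) : Fin r ⊕ Fin m ≃ α :=
  ((tᶜ.orderIsoOfFin hc).toEquiv.sumCongr
    ((t.orderIsoOfFin ht).toEquiv.trans (Equiv.subtypeEquivRight fun _ => by simp))).trans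
    (Equiv.sumCompl (· ∈ tᶜ))

section

variable {r m N : ℕ} {A C : Matrix (Fin r ⊕ Fin m) (Fin N) ℝ}

theorem wedge_mul_det_sumEquivOfCompl (hAC : A * Cᵀ = 1) (t : Finset (Fin N))
    (hc : tᶜ.card = r) (ht : t.card = m) :
    wedge (fun j => C (Sum.inr j)) t * (A.submatrix id (t.sumEquivOfCompl hc ht)).det =
      wedge (fun i => A (Sum.inl i)) tᶜ := by
  -- With the columns ordered as `tᶜ` then `t`, both coordinates are complementary blocks of the
  -- mutually inverse matrices `(A E)ᵀ` and `C E`.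
  set E := t.sumEquivOfCompl hc ht
  have hMN : (A.submatrix id E)ᵀ * C.submatrix id E = 1 := by
    rw [mul_eq_one_comm, transpose_submatrix, submatrix_mul_equiv, ← transpose_transpose C,
      ← transpose_mul, hAC, transpose_one, submatrix_id_id]
  have hJ := det_mul_det_toBlocks₂₂_of_mul_eq_one hMN
  rw [det_transpose] at hJ
  have h₂₂ : wedge (fun j => C (Sum.inr j)) t = (C.submatrix id E).toBlocks₂₂.det := by
    rw [wedge, dif_pos ht, ← det_transpose]
    rfl
  have h₁₁ : wedge (fun i => A (Sum.inl i)) tᶜ = (A.submatrix id E)ᵀ.toBlocks₁₁.det := by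
    rw [wedge, dif_pos hc]
    rfl
  rw [h₂₂, h₁₁, ← hJ, mul_comm]

theorem wedge_sq_mul_det_sq (hAC : A * Cᵀ = 1) (e : Fin r ⊕ Fin m ≃ Fin N) (t : Finset (Fin N)) :
    wedge (fun j => C (Sum.inr j)) t ^ 2 * (A.submatrix id e).det ^ 2 =
      wedge (fun i => A (Sum.inl i)) tᶜ ^ 2 := by
  have hN : r + m = N := by simpa using Fintype.card_congr e
  by_cases ht : t.card = m
  · have hc : tᶜ.card = r := by rw [card_compl, Fintype.card_fin]; omega
    set E := t.sumEquivOfCompl hc ht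
    have hdet : (A.submatrix id E).det ^ 2 = (A.submatrix id e).det ^ 2 := by
      rw [show A.submatrix id E = (A.submatrix id e).submatrix id (E.trans e.symm) by
          simp [submatrix_submatrix, Function.comp_def],
        det_permute', mul_pow, ← Int.cast_pow, ← Units.val_pow_eq_pow_val, Int.units_sq,
        Units.val_one, Int.cast_one, one_mul]
    rw [← hdet, ← mul_pow, wedge_mul_det_sumEquivOfCompl hAC]
  · have hc : tᶜ.card ≠ r := by
      have := t.card_le_univ
      simp only [card_compl, Fintype.card_fin] at this ⊢
      omega
    simp [wedge, ht, hc]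

end

theorem wedge_intCast_compl_sq {r m N : ℕ} {A C : Matrix (Fin r ⊕ Fin m) (Fin N) ℤ}
    (hAC : A * Cᵀ = 1) (e : Fin r ⊕ Fin m ≃ Fin N) (t : Finset (Fin N)) :
    wedge (fun i k => (A (Sum.inl i) k : ℝ)) tᶜ ^ 2 =
      wedge (fun j k => (C (Sum.inr j) k : ℝ)) t ^ 2 := by
  have hACℝ : A.map (Int.cast : ℤ → ℝ) * (C.map (Int.cast : ℤ → ℝ))ᵀ = 1 := by
    have h := Matrix.map_mul (L := A) (M := Cᵀ) (f := Int.castRingHom ℝ)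
    rw [hAC, Matrix.map_one _ (map_zero _) (map_one _)] at h
    exact h.symm
  have hdet : ((A.map (Int.cast : ℤ → ℝ)).submatrix id e).det ^ 2 = 1 := by
    rw [submatrix_map, ← Int.cast_det, ← Int.cast_pow,
      det_submatrix_sq_eq_one_of_mul_transpose_eq_one hAC, Int.cast_one]
  have key := wedge_sq_mul_det_sq hACℝ e t
  rw [hdet, mul_one] at key
  exact key.symm

theorem mvNorm_eq_of_sq_eq_compl {N : ℕ} {x y : Finset (Fin N) → ℝ}
    (h : ∀ t, x tᶜ ^ 2 = y t ^ 2) : mvNorm x = mvNorm y := by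
  unfold mvNorm mvInner
  simp_rw [← sq, ← h]
  exact congrArg Real.sqrt (Equiv.sum_comp (compl_involutive.toPerm _) (fun t => x t ^ 2)).symm

theorem stmt8_general (n r : ℕ)
    (v : Fin r → Fin (n + 1) → ℤ) (hv : IsPrimitive v) :
    ∃ u : Fin (n + 1 - r) → Fin (n + 1) → ℤ, IsPrimitive u ∧
      (∀ i j, ∑ k, v i k * u j k = 0) ∧
      mvNorm (wedge fun j => fun k => ((v j k : ℝ))) =
        mvNorm (wedge fun j => fun k => ((u j k : ℝ))) := by
  obtain ⟨b, hb⟩ := hv.exists_basis_extension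
  let c := b.dotDual
  refine ⟨fun j => c (Sum.inr j), c.isPrimitive_comp Sum.inr_injective, fun i j => ?_,
    mvNorm_eq_of_sq_eq_compl fun t => ?_⟩
  · simpa [← hb, dotProduct, c] using b.dotProduct_dotDual (Sum.inl i) (Sum.inr j)
  · simpa [hb] using wedge_intCast_compl_sq b.of_mul_transpose_of_dotDual
      (b.indexEquiv (Pi.basisFun ℤ (Fin (n + 1)))) t

/-- For every primitive collection v₁,…,v_r ∈ ℤ^{n+1} there is a primitive collection
u₁,…,u_{n+1-r} ∈ ℤ^{n+1} orthogonal to it with ‖v₁∧⋯∧v_r‖ = ‖u₁∧⋯∧u_{n+1-r}‖. -/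
theorem stmt8 (n r : ℕ) (h1 : 1 ≤ r) (h2 : r ≤ n)
    (v : Fin r → Fin (n + 1) → ℤ) (hv : IsPrimitive v) :
    ∃ u : Fin (n + 1 - r) → Fin (n + 1) → ℤ, IsPrimitive u ∧
      (∀ i j, ∑ k, v i k * u j k = 0) ∧
      mvNorm (wedge fun j => fun k => ((v j k : ℝ))) =
        mvNorm (wedge fun j => fun k => ((u j k : ℝ))) :=
  stmt8_general n r v hv
end

section
/- (Nonemptiness criterion for generalised Cantor sets) Let R ≥ 2 be an integer and h = (h_{p,q})_{0≤p≤q} be non-negative integers. Define t₀ = R − h_{0,0} and t_q = R − h_{q,q} − Σ_{j=1}^{q} h_{q-j,q} / (∏_{i=1}^{j} t_{q-i}) for q ≥ 1. If t_q > 0 for all q ≥ 0, then every (R,h)-Cantor set is nonempty. -/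
private lemma auxdiv14 {R : ℕ} (hR : 0 < R) (k m s : ℕ) (hm : m < R) :
    (R * k + m) / R ^ (s + 1) = k / R ^ s := by
  rw [pow_succ', ← Nat.div_div_eq_div_mul, Nat.mul_add_div hR, Nat.div_eq_of_lt hm, add_zero]

/-- Badziahin–Velani nonemptiness criterion for generalised Cantor sets.
Level-q intervals of [a,b] are indexed by k < R^q, the interval with index k being
[a + k(b-a)/R^q, a + (k+1)(b-a)/R^q]; the child intervals of index k are the indices
Rk + m, m < R. The surviving collections 𝒥_q are described by finsets `J q` of
indices: `J 0 = {0}` and `J (q+1)` is obtained from the children of `J q` by removing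
`Ĵ q = ⋃_{p ≤ q} Ĵ_{p,q}`, where at most `h p q` members of `Ĵ_{p,q}` lie below any
given index of `J p`. If the quantities t_q are all positive, the limit set is
nonempty. -/
theorem stmt14 (R : ℕ) (hR : 2 ≤ R) (h : ℕ → ℕ → ℕ)
    (a b : ℝ) (hab : a < b)
    (J : ℕ → Finset ℕ) (Jhat : ℕ → ℕ → Finset ℕ)
    (hJ0 : J 0 = {0})
    (hJstep : ∀ q, J (q + 1) =
      ((J q).biUnion fun k => (Finset.range R).image fun m => R * k + m) \
        (Finset.range (q + 1)).biUnion (fun p => Jhat p q))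
    (hcount : ∀ p q, p ≤ q → ∀ j ∈ J p,
      ((Jhat p q).filter fun k => k / R ^ (q + 1 - p) = j).card ≤ h p q)
    (t : ℕ → ℝ)
    (ht0 : t 0 = (R : ℝ) - (h 0 0 : ℝ))
    (htrec : ∀ q, 1 ≤ q → t q = (R : ℝ) - (h q q : ℝ) -
      ∑ j ∈ Finset.Icc 1 q, (h (q - j) q : ℝ) / ∏ i ∈ Finset.Icc 1 j, t (q - i))
    (htpos : ∀ q, 0 < t q) :
    (⋂ q, ⋃ k ∈ J q, Set.Icc (a + (k : ℝ) * ((b - a) / (R : ℝ) ^ q))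
      (a + ((k : ℝ) + 1) * ((b - a) / (R : ℝ) ^ q))).Nonempty := by
  classical
  have hR0 : 0 < R := by omega
  set N : ℕ → ℝ := fun q => ((J q).card : ℝ) with hN
  -- descent: ancestors of surviving indices survive
  have hdesc : ∀ q, ∀ p ≤ q, ∀ k ∈ J q, k / R ^ (q - p) ∈ J p := by
    intro q
    induction q with
    | zero =>
      intro p hp k hk
      interval_cases p
      simpa using hk
    | succ q ih =>
      intro p hp k hk
      rcases Nat.eq_or_lt_of_le hp with rfl | hp'
      · simpa using hk
      · have hpq : p ≤ q := by omega
        rw [hJstep q] at hk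
        obtain ⟨hk, -⟩ := Finset.mem_sdiff.mp hk
        obtain ⟨k', hk', hkk'⟩ := Finset.mem_biUnion.mp hk
        obtain ⟨m, hm, rfl⟩ := Finset.mem_image.mp hkk'
        have h1 : q + 1 - p = (q - p) + 1 := by omega
        rw [h1, auxdiv14 hR0 k' m (q - p) (Finset.mem_range.mp hm)]
        exact ih p hpq k' hk'
  -- counting lower bound
  have hcount2 : ∀ q, (R : ℝ) * N q - ∑ p ∈ Finset.range (q + 1), (h p q : ℝ) * N p
      ≤ N (q + 1) := by
    intro q
    set C := (J q).biUnion (fun k => (Finset.range R).image fun m => R * k + m) with hCdef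
    set D := (Finset.range (q + 1)).biUnion (fun p => Jhat p q) with hDdef
    have hCcard : C.card = R * (J q).card := by
      rw [hCdef, Finset.card_biUnion]
      · rw [Finset.sum_congr rfl (fun k _ => Finset.card_image_of_injective _
          (fun u v huv => by omega)), Finset.sum_const, Finset.card_range, smul_eq_mul,
          mul_comm]
      · intro x hx y hy hxy
        simp only [Finset.disjoint_left, Finset.mem_image, Finset.mem_range]
        rintro c ⟨m, hm, rfl⟩ ⟨m', hm', he⟩
        apply hxy
        have e1 : (R * x + m) / R = x := by
          rw [Nat.mul_add_div hR0, Nat.div_eq_of_lt hm, add_zero]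
        have e2 : (R * y + m') / R = y := by
          rw [Nat.mul_add_div hR0, Nat.div_eq_of_lt hm', add_zero]
        rw [← e1, ← he, e2]
    have hmemC : ∀ x ∈ C, ∀ p ≤ q, x / R ^ (q + 1 - p) ∈ J p := by
      intro x hx p hp
      obtain ⟨k, hk, hkk⟩ := Finset.mem_biUnion.mp hx
      obtain ⟨m, hm, rfl⟩ := Finset.mem_image.mp hkk
      have h1 : q + 1 - p = (q - p) + 1 := by omega
      rw [h1, auxdiv14 hR0 k m (q - p) (Finset.mem_range.mp hm)]
      exact hdesc q p hp k hk
    have hinterp : ∀ p ∈ Finset.range (q + 1),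
        (C ∩ Jhat p q).card ≤ h p q * (J p).card := by
      intro p hp
      have hpq : p ≤ q := Nat.lt_succ_iff.mp (Finset.mem_range.mp hp)
      have hsub : C ∩ Jhat p q ⊆ (J p).biUnion
          (fun j => (Jhat p q).filter fun x => x / R ^ (q + 1 - p) = j) := by
        intro x hx
        obtain ⟨hxC, hxJ⟩ := Finset.mem_inter.mp hx
        refine Finset.mem_biUnion.mpr ⟨x / R ^ (q + 1 - p), hmemC x hxC p hpq, ?_⟩
        exact Finset.mem_filter.mpr ⟨hxJ, rfl⟩
      calc (C ∩ Jhat p q).card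
          ≤ ((J p).biUnion (fun j => (Jhat p q).filter
              fun x => x / R ^ (q + 1 - p) = j)).card := Finset.card_le_card hsub
        _ ≤ ∑ j ∈ J p, ((Jhat p q).filter fun x => x / R ^ (q + 1 - p) = j).card :=
            Finset.card_biUnion_le
        _ ≤ ∑ _j ∈ J p, h p q := Finset.sum_le_sum (fun j hj => hcount p q hpq j hj)
        _ = h p q * (J p).card := by rw [Finset.sum_const, smul_eq_mul, mul_comm]
    have hJeq : J (q + 1) = C \ (C ∩ D) := by
      rw [hJstep q, Finset.sdiff_inter_self_left]
    have hsplit : (J (q + 1)).card = C.card - (C ∩ D).card := by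
      rw [hJeq, Finset.card_sdiff_of_subset Finset.inter_subset_left]
    have hinter : (C ∩ D).card ≤ ∑ p ∈ Finset.range (q + 1), h p q * (J p).card := by
      have hsub : C ∩ D ⊆ (Finset.range (q + 1)).biUnion (fun p => C ∩ Jhat p q) := by
        intro x hx
        simp only [hDdef, Finset.mem_inter, Finset.mem_biUnion] at hx ⊢
        tauto
      calc (C ∩ D).card
          ≤ ((Finset.range (q + 1)).biUnion (fun p => C ∩ Jhat p q)).card :=
            Finset.card_le_card hsub
        _ ≤ ∑ p ∈ Finset.range (q + 1), (C ∩ Jhat p q).card := Finset.card_biUnion_le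
        _ ≤ ∑ p ∈ Finset.range (q + 1), h p q * (J p).card :=
            Finset.sum_le_sum hinterp
    have hle : (C ∩ D).card ≤ C.card := Finset.card_le_card Finset.inter_subset_left
    have hcast : N (q + 1) = (C.card : ℝ) - ((C ∩ D).card : ℝ) := by
      show ((J (q + 1)).card : ℝ) = _
      rw [hsplit, Nat.cast_sub hle]
    have h1 : ((C ∩ D).card : ℝ) ≤ ∑ p ∈ Finset.range (q + 1), (h p q : ℝ) * N p := by
      calc ((C ∩ D).card : ℝ) ≤ ((∑ p ∈ Finset.range (q + 1), h p q * (J p).card : ℕ) : ℝ) :=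
            Nat.cast_le.mpr hinter
        _ = ∑ p ∈ Finset.range (q + 1), (h p q : ℝ) * N p := by push_cast; rfl
    have h2 : (C.card : ℝ) = R * N q := by rw [hCcard]; push_cast; rfl
    rw [hcast, h2]
    linarith
  -- the key inequality
  have hprodpos : ∀ s : Finset ℕ, 0 < ∏ i ∈ s, t i :=
    fun s => Finset.prod_pos (fun i _ => htpos i)
  have hNnonneg : ∀ q, 0 ≤ N q := fun q => Nat.cast_nonneg _
  have key : ∀ q, t q * N q ≤ N (q + 1) := by
    intro q
    induction q using Nat.strong_induction_on with
    | _ q ih =>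
      have chain : ∀ d p, p + d = q → N p * ∏ i ∈ Finset.Ico p q, t i ≤ N q := by
        intro d
        induction d with
        | zero =>
          intro p hp
          have : p = q := by omega
          subst this
          simp [Finset.Ico_self]
        | succ d ihd =>
          intro p hp
          have hplt : p < q := by omega
          rw [Finset.prod_eq_prod_Ico_succ_bot hplt]
          calc N p * (t p * ∏ i ∈ Finset.Ico (p + 1) q, t i)
              = (t p * N p) * ∏ i ∈ Finset.Ico (p + 1) q, t i := by ring
            _ ≤ N (p + 1) * ∏ i ∈ Finset.Ico (p + 1) q, t i :=
                mul_le_mul_of_nonneg_right (ih p hplt) (hprodpos _).le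
            _ ≤ N q := ihd (p + 1) (by omega)
      have hub : ∀ p, p ≤ q → N p ≤ N q / ∏ i ∈ Finset.Ico p q, t i := by
        intro p hp
        rw [le_div_iff₀ (hprodpos _)]
        exact chain (q - p) p (by omega)
      have hteq : t q = (R : ℝ) -
          ∑ p ∈ Finset.range (q + 1), (h p q : ℝ) / ∏ i ∈ Finset.Ico p q, t i := by
        rcases Nat.eq_zero_or_pos q with rfl | hq1
        · rw [ht0]
          simp
        · have hprodIcc : ∀ j, 1 ≤ j → j ≤ q →
              ∏ i ∈ Finset.Icc 1 j, t (q - i) = ∏ i ∈ Finset.Ico (q - j) q, t i := by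
            intro j h1 h2
            rw [← Finset.Ico_add_one_right_eq_Icc, Finset.prod_Ico_eq_prod_range,
              Finset.prod_Ico_eq_prod_range]
            have e2 : j + 1 - 1 = j := by omega
            have e3 : q - (q - j) = j := by omega
            rw [e2, e3, ← Finset.prod_range_reflect (fun i => t (q - j + i)) j]
            refine Finset.prod_congr rfl (fun i hi => ?_)
            have : i < j := Finset.mem_range.mp hi
            congr 1
            omega
          have hsum : ∑ j ∈ Finset.Icc 1 q, (h (q - j) q : ℝ) /
                ∏ i ∈ Finset.Icc 1 j, t (q - i)
              = ∑ p ∈ Finset.range q, (h p q : ℝ) / ∏ i ∈ Finset.Ico p q, t i := by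
            rw [← Finset.Ico_add_one_right_eq_Icc, Finset.sum_Ico_eq_sum_range]
            rw [← Finset.sum_range_reflect
              (fun p => (h p q : ℝ) / ∏ i ∈ Finset.Ico p q, t i) q]
            refine Finset.sum_congr (by norm_num) (fun i hi => ?_)
            have hi' : i < q := Finset.mem_range.mp hi
            rw [hprodIcc (1 + i) (by omega) (by omega)]
            have e : q - (1 + i) = q - 1 - i := by omega
            rw [e]
          have hlast : ∑ p ∈ Finset.range (q + 1), (h p q : ℝ) / ∏ i ∈ Finset.Ico p q, t i
              = (∑ p ∈ Finset.range q, (h p q : ℝ) / ∏ i ∈ Finset.Ico p q, t i)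
                + (h q q : ℝ) := by
            rw [Finset.sum_range_succ, Finset.Ico_self, Finset.prod_empty, div_one]
          rw [htrec q hq1, hsum, hlast]
          ring
      calc t q * N q
          = (R : ℝ) * N q - ∑ p ∈ Finset.range (q + 1),
              (h p q : ℝ) * (N q / ∏ i ∈ Finset.Ico p q, t i) := by
            rw [hteq, sub_mul, Finset.sum_mul]
            congr 1
            refine Finset.sum_congr rfl (fun p _ => ?_)
            ring
        _ ≤ (R : ℝ) * N q - ∑ p ∈ Finset.range (q + 1), (h p q : ℝ) * N p := by
            have : ∑ p ∈ Finset.range (q + 1), (h p q : ℝ) * N p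
                ≤ ∑ p ∈ Finset.range (q + 1),
                  (h p q : ℝ) * (N q / ∏ i ∈ Finset.Ico p q, t i) := by
              refine Finset.sum_le_sum (fun p hp => ?_)
              exact mul_le_mul_of_nonneg_left
                (hub p (Nat.lt_succ_iff.mp (Finset.mem_range.mp hp))) (Nat.cast_nonneg _)
            linarith
        _ ≤ N (q + 1) := hcount2 q
  -- positivity of cardinalities
  have hNpos : ∀ q, 0 < N q := by
    intro q
    induction q with
    | zero => show (0:ℝ) < ((J 0).card : ℝ); rw [hJ0]; norm_num
    | succ q ihq => calc (0 : ℝ) < t q * N q := mul_pos (htpos q) ihq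
                      _ ≤ N (q + 1) := key q
  have hJne : ∀ q, (J q).Nonempty := by
    intro q
    rw [← Finset.card_pos]
    have h0 : (0 : ℝ) < ((J q).card : ℝ) := hNpos q
    exact_mod_cast h0
  -- topology
  set K : ℕ → Set ℝ := fun q => ⋃ k ∈ J q,
    Set.Icc (a + (k : ℝ) * ((b - a) / (R : ℝ) ^ q))
      (a + ((k : ℝ) + 1) * ((b - a) / (R : ℝ) ^ q)) with hK
  have hRpos : (0 : ℝ) < (R : ℝ) := by exact_mod_cast hR0
  have hcpos : ∀ q, (0 : ℝ) < (b - a) / (R : ℝ) ^ q := by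
    intro q
    exact div_pos (by linarith) (pow_pos hRpos q)
  have hdec : ∀ n, K (n + 1) ⊆ K n := by
    intro n x hx
    simp only [hK, Set.mem_iUnion] at hx ⊢
    obtain ⟨idx, hidx, hxmem⟩ := hx
    rw [hJstep n] at hidx
    obtain ⟨hidx, -⟩ := Finset.mem_sdiff.mp hidx
    obtain ⟨k, hk, hkk⟩ := Finset.mem_biUnion.mp hidx
    obtain ⟨m, hm, rfl⟩ := Finset.mem_image.mp hkk
    refine ⟨k, hk, ?_⟩
    have hmR : m < R := Finset.mem_range.mp hm
    have hc := hcpos (n + 1)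
    have hrel : (b - a) / (R : ℝ) ^ n = R * ((b - a) / (R : ℝ) ^ (n + 1)) := by
      rw [pow_succ]
      field_simp
    obtain ⟨hx1, hx2⟩ := hxmem
    push_cast at hx1 hx2
    constructor
    · rw [hrel]
      have hmr : (0 : ℝ) ≤ (m : ℝ) := Nat.cast_nonneg m
      nlinarith
    · rw [hrel]
      have hmr : (m : ℝ) + 1 ≤ (R : ℝ) := by exact_mod_cast hmR
      nlinarith
  have hne : ∀ n, (K n).Nonempty := by
    intro n
    obtain ⟨k, hk⟩ := hJne n
    refine ⟨a + (k : ℝ) * ((b - a) / (R : ℝ) ^ n), ?_⟩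
    simp only [hK, Set.mem_iUnion]
    refine ⟨k, hk, le_refl _, ?_⟩
    have := hcpos n
    nlinarith
  have hcl : ∀ n, IsClosed (K n) := by
    intro n
    exact isClosed_biUnion_finset (fun i _ => isClosed_Icc)
  have hcpt : IsCompact (K 0) :=
    (J 0).isCompact_biUnion (fun i _ => isCompact_Icc)
  exact IsCompact.nonempty_iInter_of_sequence_nonempty_isCompact_isClosed K hdec hne hcpt hcl
end
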